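/- arXiv:2203.06744 — 9 statements merged into one kernel-verified Lean document; each statement's English description precedes it below -/
import Mathlib

section
/- For standard updates α and β, if the epistemic proposition φ is preserved by bisimulations and α ∼ β, then [α]φ = [β]φ as epistemic propositions, i.e., for every state model S, ([α]φ)_S = ([β]φ)_S. -/
structure StateModel (Agent Atom : Type) where
  World : Type
  rel : Agent → World → World → Prop
  val : Atom → World → Prop

def IsBisim {Agent Atom : Type} (S T : StateModel Agent Atom)
    (R : S.World → T.World → Prop) : Prop :=
  ∀ s t, R s t →
    (∀ p, S.val p s ↔ T.val p t) ∧
    (∀ A s', S.rel A s s' → ∃ t', T.rel A t t' ∧ R s' t') ∧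
    (∀ A t', T.rel A t t' → ∃ s', S.rel A s s' ∧ R s' t')

def IsTotalBisim {Agent Atom : Type} (S T : StateModel Agent Atom)
    (R : S.World → T.World → Prop) : Prop :=
  IsBisim S T R ∧ (∀ s, ∃ t, R s t) ∧ (∀ t, ∃ s, R s t)

/-- An update: an operation on state models together with a transition relation
from each model into its update. -/
structure Update (Agent Atom : Type) where
  model : StateModel Agent Atom → StateModel Agent Atom
  rel : (S : StateModel Agent Atom) → S.World → (model S).World → Prop

/-- Updates α and β are equivalent if for every total bisimulation `R` between `S`
and `T`, the relation `(α_S)⁻¹ ; R ; β_T` is a total bisimulation between `S(α)`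
and `T(β)`. -/
def UpdEquiv {Agent Atom : Type} (α β : Update Agent Atom) : Prop :=
  ∀ (S T : StateModel Agent Atom) (R : S.World → T.World → Prop),
    IsTotalBisim S T R →
    IsTotalBisim (α.model S) (β.model T)
      (fun x y => ∃ s t, α.rel S s x ∧ R s t ∧ β.rel T t y)


/-- An epistemic proposition assigns to each state model a set of its worlds. -/
def EProp (Agent Atom : Type) := (S : StateModel Agent Atom) → Set S.World

def Preserved {Agent Atom : Type} (φ : EProp Agent Atom) : Prop :=
  ∀ (S T : StateModel Agent Atom) (R : S.World → T.World → Prop),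
    IsBisim S T R → ∀ s t, R s t → (s ∈ φ S ↔ t ∈ φ T)

/-- An update is standard if the converse of each update relation is a partial
function: each target state has at most one source. -/
def Update.Standard {Agent Atom : Type} (α : Update Agent Atom) : Prop :=
  ∀ (S : StateModel Agent Atom) (t : (α.model S).World) (s s' : S.World),
    α.rel S s t → α.rel S s' t → s = s'

/-- The dynamic box modality `[α]φ` determined by an update. -/
def boxU {Agent Atom : Type} (α : Update Agent Atom) (φ : EProp Agent Atom) :
    EProp Agent Atom :=
  fun S => {s | ∀ t, α.rel S s t → t ∈ φ (α.model S)}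

variable {Agent Atom : Type}

theorem IsBisim.flip {S T : StateModel Agent Atom} {R : S.World → T.World → Prop}
    (h : IsBisim S T R) : IsBisim T S (flip R) := fun t s hst =>
  let ⟨hval, hforth, hback⟩ := h s t hst
  ⟨fun p => (hval p).symm, hback, hforth⟩

theorem IsTotalBisim.flip {S T : StateModel Agent Atom} {R : S.World → T.World → Prop}
    (h : IsTotalBisim S T R) : IsTotalBisim T S (flip R) :=
  ⟨h.1.flip, h.2.2, h.2.1⟩

theorem isTotalBisim_eq (S : StateModel Agent Atom) : IsTotalBisim S S Eq :=
  ⟨fun _ _ hst => hst ▸ ⟨fun _ => Iff.rfl, fun _ s' hs' => ⟨s', hs', rfl⟩,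
      fun _ s' hs' => ⟨s', hs', rfl⟩⟩,
    fun s => ⟨s, rfl⟩, fun s => ⟨s, rfl⟩⟩

theorem UpdEquiv.isTotalBisim_comp {α β : Update Agent Atom} (h : UpdEquiv α β)
    (S : StateModel Agent Atom) :
    IsTotalBisim (α.model S) (β.model S) (Relation.Comp (flip (α.rel S)) (β.rel S)) := by
  convert h S S Eq (isTotalBisim_eq S) using 3
  simp [Relation.Comp, flip]

/-- Every `β`-successor `y` of `s` is linked to some `α`-successor `x`; since `β` is standard,
`x` is an `α`-successor of `s` itself, and `x ∈ φ` transfers to `y` along the bisimulation. -/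
theorem boxU_subset_boxU {α β : Update Agent Atom} (hβ : β.Standard) {φ : EProp Agent Atom}
    (hφ : Preserved φ) {S : StateModel Agent Atom}
    (h : IsTotalBisim (α.model S) (β.model S) (Relation.Comp (flip (α.rel S)) (β.rel S))) :
    boxU α φ S ⊆ boxU β φ S := by
  intro s hs y hsy
  obtain ⟨x, s', hs'x, hs'y⟩ := h.2.2 y
  obtain rfl : s' = s := hβ S y s' s hs'y hsy
  exact (hφ _ _ _ h.1 x y ⟨_, hs'x, hs'y⟩).mp (hs x hs'x)

theorem box_respects_updEquiv {Agent Atom : Type} (α β : Update Agent Atom)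
    (hα : α.Standard) (hβ : β.Standard) (φ : EProp Agent Atom)
    (hφ : Preserved φ) (hαβ : UpdEquiv α β) :
    ∀ S : StateModel Agent Atom, boxU α φ S = boxU β φ S := by
  intro S
  have h := hαβ.isTotalBisim_comp S
  have h' : IsTotalBisim (β.model S) (α.model S) (Relation.Comp (flip (β.rel S)) (α.rel S)) := by
    simpa only [Relation.flip_comp, flip_flip] using h.flip
  exact (boxU_subset_boxU hβ hφ h).antisymm (boxU_subset_boxU hα hφ h')
end

section
/- If α and β are standard updates and α ∼ β, then α and β have the same domain: for every state model S, the domain of the relation α_S equals the domain of β_S. -/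
/- The converse of a total bisimulation is again one, which makes `∼` symmetric, so one inclusion
of domains suffices. For it, apply `α ∼ β` to the identity bisimulation on `S`: totality gives, for
each `x` with `s α_S x`, some `s'` and `y` with `s' α_S x` and `s' β_S y`, and standardness of `α`
forces `s' = s`. -/

section

variable {Agent Atom : Type}

theorem UpdEquiv.symm {α β : Update Agent Atom} (h : UpdEquiv α β) :
    UpdEquiv β α := by
  intro S T R hR
  have hcomp : (fun y x => ∃ s t, β.rel S s y ∧ R s t ∧ α.rel T t x) =
      flip (fun x y => ∃ t s, α.rel T t x ∧ flip R t s ∧ β.rel S s y) := by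
    ext y x
    constructor <;> rintro ⟨a, b, h₁, h₂, h₃⟩ <;> exact ⟨b, a, h₃, h₂, h₁⟩
  rw [hcomp]
  exact (h T S (flip R) hR.flip).flip

theorem Update.Standard.exists_rel_of_updEquiv {α β : Update Agent Atom}
    (hα : α.Standard) (hαβ : UpdEquiv α β) (S : StateModel Agent Atom) (s : S.World)
    (hs : ∃ x, α.rel S s x) : ∃ y, β.rel S s y := by
  obtain ⟨x, hx⟩ := hs
  obtain ⟨y, s', _, hs', rfl, hy⟩ := (hαβ S S Eq (isTotalBisim_eq S)).2.1 x
  exact ⟨y, hα S x s' s hs' hx ▸ hy⟩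

end

theorem equiv_standard_updates_same_domain {Agent Atom : Type}
    (α β : Update Agent Atom) (hα : α.Standard) (hβ : β.Standard)
    (hαβ : UpdEquiv α β) :
    ∀ (S : StateModel Agent Atom) (s : S.World),
      (∃ t, α.rel S s t) ↔ (∃ t, β.rel S s t) := fun S s =>
  ⟨hα.exists_rel_of_updEquiv hαβ S s, hβ.exists_rel_of_updEquiv hαβ.symm S s⟩
end

section
/- The Atomic Permanence axiom is sound: for every state model S, every state s, every action type σ_i with precondition sentence ψ_i, and every atomic sentence p, s satisfies [σ_i ψ⃗]p if and only if s satisfies ψ_i → p. -/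
/-- The update product `S ⊗ Σ` for a signature-based program model: action
types are `Fin n` with accessibility `srel` and preconditions `ψ`; the new
states are pairs `(s, σⱼ)` with `s ∈ ⟦ψⱼ⟧_S`, with product accessibility
relations and valuation inherited from `S`. -/
def prodModel {Agent Atom : Type} {n : ℕ} (S : StateModel Agent Atom)
    (srel : Agent → Fin n → Fin n → Prop) (ψ : Fin n → EProp Agent Atom) :
    StateModel Agent Atom where
  World := {x : S.World × Fin n // x.1 ∈ ψ x.2 S}
  rel A x y := S.rel A x.1.1 y.1.1 ∧ srel A x.1.2 y.1.2
  val p x := S.val p x.1.1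

theorem Subtype.forall_val_eq_iff {α : Type*} {q : α → Prop} {a : α} {P : Subtype q → Prop} :
    (∀ t : Subtype q, t.1 = a → P t) ↔ ∀ h : q a, P ⟨a, h⟩ :=
  ⟨fun h ha => h ⟨a, ha⟩ rfl, by rintro h ⟨b, hb⟩ rfl; exact h hb⟩

/-- The update induced by `σᵢ ψ⃗` relates `s` exactly to the states `t = (s, σᵢ)` of `S ⊗ Σ`. -/
theorem atomic_permanence_sound {Agent Atom : Type} {n : ℕ}
    (S : StateModel Agent Atom) (srel : Agent → Fin n → Fin n → Prop)
    (ψ : Fin n → EProp Agent Atom) (i : Fin n) (s : S.World) (p : Atom) :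
    (∀ t : (prodModel S srel ψ).World, t.1 = (s, i) → (prodModel S srel ψ).val p t)
      ↔ (s ∈ ψ i S → S.val p s) :=
  Subtype.forall_val_eq_iff (P := (prodModel S srel ψ).val p)
end

section
/- The Partial Functionality axiom is sound: for every state model S and state s, s satisfies [σ_i ψ⃗]¬χ if and only if s satisfies ψ_i → ¬[σ_i ψ⃗]χ. The key fact is that the update induced by the program σ_i ψ⃗ relates each state s to at most one state, namely (s,σ_i) when s satisfies ψ_i. -/
namespace Subtype

variable {α : Type*} {p : α → Prop}

theorem forall_val_eq_iff_s8 {q : Subtype p → Prop} (a : α) :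
    (∀ t : Subtype p, t.1 = a → q t) ↔ ∀ h : p a, q ⟨a, h⟩ :=
  ⟨fun H h => H ⟨a, h⟩ rfl, fun H ⟨_, h⟩ ht => by subst ht; exact H h⟩

/-- The box over a relation with at most one successor commutes with negation, up to the
condition that a successor exists. -/
theorem forall_val_eq_not_iff (a : α) (χ : Subtype p → Prop) :
    (∀ t : Subtype p, t.1 = a → ¬ χ t) ↔ (p a → ¬ ∀ t : Subtype p, t.1 = a → χ t) := by
  rw [forall_val_eq_iff_s8, forall_val_eq_iff_s8]
  exact ⟨fun H h hall => H h (hall h), fun H h hχ => H h fun _ => hχ⟩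

end Subtype

/-- Soundness of Partial Functionality: `[σᵢ ψ⃗]¬χ ↔ (ψᵢ → ¬[σᵢ ψ⃗]χ)`, together
with the key fact that the update induced by `σᵢ ψ⃗` relates each state to at
most one state (namely `(s, σᵢ)` when `s` satisfies `ψᵢ`).  Here `χ'` is the
interpretation of an arbitrary sentence `χ` in the updated model. -/
theorem partial_functionality_sound {Agent Atom : Type} {n : ℕ}
    (S : StateModel Agent Atom) (srel : Agent → Fin n → Fin n → Prop)
    (ψ : Fin n → EProp Agent Atom) (i : Fin n) (s : S.World)
    (χ' : (prodModel S srel ψ).World → Prop) :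
    (∀ t t' : (prodModel S srel ψ).World, t.1 = (s, i) → t'.1 = (s, i) → t = t') ∧
    ((∀ t : (prodModel S srel ψ).World, t.1 = (s, i) → ¬ χ' t)
      ↔ (s ∈ ψ i S → ¬ (∀ t : (prodModel S srel ψ).World, t.1 = (s, i) → χ' t))) :=
  ⟨fun _ _ ht ht' => Subtype.ext (ht.trans ht'.symm),
    Subtype.forall_val_eq_not_iff (p := fun x : S.World × Fin n => x.1 ∈ ψ x.2 S) (s, i) χ'⟩
end

section
/- The Action-Knowledge axiom is sound: for every state model S and state s, s satisfies [σ_i ψ⃗]□_A φ if and only if s satisfies ψ_i → ⋀{□_A [σ_j ψ⃗]φ : σ_i →_A σ_j in Σ}. -/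
namespace prodModel

variable {Agent Atom : Type} {n : ℕ} {S : StateModel Agent Atom}
  {srel : Agent → Fin n → Fin n → Prop} {ψ : Fin n → EProp Agent Atom}

theorem forall_update_iff {s : S.World} {i : Fin n}
    {P : (prodModel S srel ψ).World → Prop} :
    (∀ t : (prodModel S srel ψ).World, t.1 = (s, i) → P t) ↔ ∀ h : s ∈ ψ i S, P ⟨(s, i), h⟩ := by
  constructor
  · exact fun hP h => hP _ rfl
  · rintro hP ⟨_, h⟩ rfl
    exact hP h

theorem box_iff (A : Agent) (x : (prodModel S srel ψ).World)
    (φ' : (prodModel S srel ψ).World → Prop) :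
    (∀ t' : (prodModel S srel ψ).World, (prodModel S srel ψ).rel A x t' → φ' t') ↔
      ∀ j : Fin n, srel A x.1.2 j → ∀ s' : S.World, S.rel A x.1.1 s' →
        ∀ t' : (prodModel S srel ψ).World, t'.1 = (s', j) → φ' t' := by
  constructor
  · rintro hφ j hj s' hs' ⟨_, _⟩ rfl
    exact hφ _ ⟨hs', hj⟩
  · exact fun hφ t' ⟨hs', hj⟩ => hφ _ hj _ hs' t' rfl

end prodModel

/-- Soundness of the Action-Knowledge axiom:
`[σᵢ ψ⃗]□_A φ ↔ (ψᵢ → ⋀ {□_A [σⱼ ψ⃗]φ : σᵢ →_A σⱼ in Σ})`.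
Here `φ'` is the interpretation of an arbitrary sentence `φ` in the updated
model `S ⊗ Σ`. -/
theorem action_knowledge_sound {Agent Atom : Type} {n : ℕ}
    (S : StateModel Agent Atom) (srel : Agent → Fin n → Fin n → Prop)
    (ψ : Fin n → EProp Agent Atom) (i : Fin n) (A : Agent) (s : S.World)
    (φ' : (prodModel S srel ψ).World → Prop) :
    (∀ t : (prodModel S srel ψ).World, t.1 = (s, i) →
        ∀ t' : (prodModel S srel ψ).World, (prodModel S srel ψ).rel A t t' → φ' t')
      ↔ (s ∈ ψ i S → ∀ j : Fin n, srel A i j → ∀ s' : S.World, S.rel A s s' →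
          ∀ t' : (prodModel S srel ψ).World, t'.1 = (s', j) → φ' t') := by
  exact prodModel.forall_update_iff.trans (forall_congr' fun _ => prodModel.box_iff A _ φ')
end

section
/- The canonical action model is locally finite: for each simple action α (a term built from basic actions σ_i ψ⃗ by binary composition), the set of simple actions β reachable from α via →*_Agents (the reflexive-transitive closure of the union of all agent accessibility relations) is finite, given that the action signature Σ is finite. -/
/-- Simple actions: basic actions `σᵢ ψ⃗` (a signature action type together with
a tuple of sentences), `skip`, `crash`, and compositions. -/
inductive SimpleAct (SigAct Sent : Type) (n : ℕ) : Type
  | skip : SimpleAct SigAct Sent n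
  | crash : SimpleAct SigAct Sent n
  | basic : SigAct → (Fin n → Sent) → SimpleAct SigAct Sent n
  | comp : SimpleAct SigAct Sent n → SimpleAct SigAct Sent n → SimpleAct SigAct Sent n

/-- The accessibility relations of the canonical action model: the least
relations with `skip →_A skip`, `σᵢψ⃗ →_A σⱼψ⃗` iff `σᵢ →_A σⱼ` in the
signature, and closed under composition. -/
inductive ARel {Agent SigAct Sent : Type} {n : ℕ}
    (srel : Agent → SigAct → SigAct → Prop) (A : Agent) :
    SimpleAct SigAct Sent n → SimpleAct SigAct Sent n → Prop
  | skip : ARel srel A SimpleAct.skip SimpleAct.skip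
  | basic (i j : SigAct) (ψ : Fin n → Sent) :
      srel A i j → ARel srel A (SimpleAct.basic i ψ) (SimpleAct.basic j ψ)
  | comp {α α' β β' : SimpleAct SigAct Sent n} :
      ARel srel A α α' → ARel srel A β β' →
      ARel srel A (SimpleAct.comp α β) (SimpleAct.comp α' β')

/-!
An accessibility step only replaces the signature actions sitting at the basic positions of a
simple action; the shape of the term and its tuples of sentences never change. So everything
reachable from `α` is a variant of `α` in this sense, and since the signature is finite, `α` has
only finitely many variants.
-/

namespace SimpleAct

variable {SigAct Sent : Type} {n : ℕ}

def variants : SimpleAct SigAct Sent n → Set (SimpleAct SigAct Sent n)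
  | skip => {skip}
  | crash => {crash}
  | basic _ ψ => Set.range fun j => basic j ψ
  | comp α β => Set.image2 comp α.variants β.variants

theorem finite_variants [Finite SigAct] (α : SimpleAct SigAct Sent n) : α.variants.Finite := by
  induction α with
  | skip | crash => exact Set.finite_singleton _
  | basic => exact Set.finite_range _
  | comp α β hα hβ => exact hα.image2 _ hβ

theorem mem_variants_self (α : SimpleAct SigAct Sent n) : α ∈ α.variants := by
  induction α with
  | skip | crash => rfl
  | basic i => exact ⟨i, rfl⟩
  | comp α β hα hβ => exact Set.mem_image2_of_mem hα hβ

end SimpleAct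

theorem ARel.mem_variants {Agent SigAct Sent : Type} {n : ℕ}
    {srel : Agent → SigAct → SigAct → Prop} {A : Agent} {α β γ : SimpleAct SigAct Sent n}
    (h : ARel srel A β γ) (hβ : β ∈ α.variants) : γ ∈ α.variants := by
  induction α generalizing β γ with
  | skip => subst hβ; cases h; rfl
  | crash => subst hβ; cases h
  | basic =>
    obtain ⟨_, rfl⟩ := hβ
    cases h with
    | basic _ k => exact ⟨k, rfl⟩
  | comp α₁ α₂ ih₁ ih₂ =>
    obtain ⟨β₁, hβ₁, β₂, hβ₂, rfl⟩ := hβ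
    cases h with
    | comp h₁ h₂ => exact Set.mem_image2_of_mem (ih₁ h₁ hβ₁) (ih₂ h₂ hβ₂)

/-- The canonical action model is locally finite: if the action signature is
finite, then for each simple action `α` only finitely many simple actions are
reachable from `α` via the reflexive-transitive closure of the union of all the
agents' accessibility relations. -/
theorem canonical_action_model_locally_finite {Agent SigAct Sent : Type} {n : ℕ}
    [Fintype SigAct] (srel : Agent → SigAct → SigAct → Prop)
    (α : SimpleAct SigAct Sent n) :
    {β | Relation.ReflTransGen
        (fun a b => ∃ A : Agent, ARel (Sent := Sent) (n := n) srel A a b) α β}.Finite := by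
  refine α.finite_variants.subset fun β hβ => ?_
  induction hβ with
  | refl => exact α.mem_variants_self
  | tail _ hstep ih =>
    obtain ⟨A, hA⟩ := hstep
    exact hA.mem_variants ih
end

section
/- The term rewriting system R for dynamic epistemic logic is terminating: there is no infinite sequence of rewrites t_1 → t_2 → t_3 → ⋯ . This follows because there is an interpretation of all term constructors as strictly monotone functions on the naturals ≥ 3 under which the interpretation of the left side of each rewrite rule strictly exceeds that of the right side. -/
/-- Two-sorted terms of the rewriting system: `false` is the sentence sort,
`true` the action sort.  The signature has atomic sentence constants (and a
constant `⊤` used to render the empty conjunction), ¬, ∧, →, □_A, □*_B, an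
application `[·]·`, `Pre`, action constructors `σᵢ` (taking `n` sentences) and
action composition `∘`. -/
inductive Tm (Agent AgSet Atom : Type) (n : ℕ) : Bool → Type
  | tru : Tm Agent AgSet Atom n false
  | atom : Atom → Tm Agent AgSet Atom n false
  | neg : Tm Agent AgSet Atom n false → Tm Agent AgSet Atom n false
  | conj : Tm Agent AgSet Atom n false → Tm Agent AgSet Atom n false →
      Tm Agent AgSet Atom n false
  | impl : Tm Agent AgSet Atom n false → Tm Agent AgSet Atom n false →
      Tm Agent AgSet Atom n false
  | box : Agent → Tm Agent AgSet Atom n false → Tm Agent AgSet Atom n false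
  | boxStar : AgSet → Tm Agent AgSet Atom n false → Tm Agent AgSet Atom n false
  | app : Tm Agent AgSet Atom n true → Tm Agent AgSet Atom n false →
      Tm Agent AgSet Atom n false
  | pre : Tm Agent AgSet Atom n true → Tm Agent AgSet Atom n false
  | sig : Fin n → (Fin n → Tm Agent AgSet Atom n false) → Tm Agent AgSet Atom n true
  | comp : Tm Agent AgSet Atom n true → Tm Agent AgSet Atom n true →
      Tm Agent AgSet Atom n true

namespace Tm

variable {Agent AgSet Atom : Type} {n : ℕ}

/-- The accessibility relations of the canonical action model on action terms:
`σᵢ ψ⃗ →_A σⱼ ψ⃗` iff `σᵢ →_A σⱼ` in the signature, and compositions act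
componentwise. -/
inductive ARel (srel : Agent → Fin n → Fin n → Prop) (A : Agent) :
    Tm Agent AgSet Atom n true → Tm Agent AgSet Atom n true → Prop
  | sig (i j : Fin n) (ψ : Fin n → Tm Agent AgSet Atom n false) :
      srel A i j → ARel srel A (Tm.sig i ψ) (Tm.sig j ψ)
  | comp {α α' β β' : Tm Agent AgSet Atom n true} :
      ARel srel A α α' → ARel srel A β β' →
      ARel srel A (Tm.comp α β) (Tm.comp α' β')

/-- A fixed rendering of a finite conjunction as nested binary conjunctions. -/
def conjList : List (Tm Agent AgSet Atom n false) → Tm Agent AgSet Atom n false :=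
  fun l => l.foldr Tm.conj Tm.tru

/-- One-step rewriting: the rules (r1)–(r9) applied in any context. -/
inductive Rw (srel : Agent → Fin n → Fin n → Prop) :
    {b : Bool} → Tm Agent AgSet Atom n b → Tm Agent AgSet Atom n b → Prop
  | r1 (x y : Tm Agent AgSet Atom n false) :
      Rw srel (Tm.impl x y) (Tm.neg (Tm.conj x (Tm.neg y)))
  | r2 (i : Fin n) (ψ : Fin n → Tm Agent AgSet Atom n false) :
      Rw srel (Tm.pre (Tm.sig i ψ)) (ψ i)
  | r3 (x y : Tm Agent AgSet Atom n true) :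
      Rw srel (Tm.pre (Tm.comp x y)) (Tm.conj (Tm.pre x) (Tm.app x (Tm.pre y)))
  | r4 (x : Tm Agent AgSet Atom n true) (p : Atom) :
      Rw srel (Tm.app x (Tm.atom p)) (Tm.impl (Tm.pre x) (Tm.atom p))
  | r5 (x : Tm Agent AgSet Atom n true) (y : Tm Agent AgSet Atom n false) :
      Rw srel (Tm.app x (Tm.neg y)) (Tm.impl (Tm.pre x) (Tm.neg (Tm.app x y)))
  | r6 (x : Tm Agent AgSet Atom n true) (y z : Tm Agent AgSet Atom n false) :
      Rw srel (Tm.app x (Tm.conj y z)) (Tm.conj (Tm.app x y) (Tm.app x z))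
  | r7 (α : Tm Agent AgSet Atom n true) (A : Agent)
      (x : Tm Agent AgSet Atom n false) (l : List (Tm Agent AgSet Atom n true)) :
      l.Nodup → (∀ β, β ∈ l ↔ ARel srel A α β) →
      Rw srel (Tm.app α (Tm.box A x))
        (Tm.impl (Tm.pre α) (conjList (l.map (fun β => Tm.box A (Tm.app β x)))))
  | r8 (x y : Tm Agent AgSet Atom n true) (z : Tm Agent AgSet Atom n false) :
      Rw srel (Tm.app x (Tm.app y z)) (Tm.app (Tm.comp x y) z)
  | r9 (x y z : Tm Agent AgSet Atom n true) :
      Rw srel (Tm.comp x (Tm.comp y z)) (Tm.comp (Tm.comp x y) z)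
  -- congruence rules: rewriting in any subterm
  | negC {a b} : Rw srel a b → Rw srel (Tm.neg a) (Tm.neg b)
  | conjL {a b c} : Rw srel a b → Rw srel (Tm.conj a c) (Tm.conj b c)
  | conjR {a b c} : Rw srel a b → Rw srel (Tm.conj c a) (Tm.conj c b)
  | implL {a b c} : Rw srel a b → Rw srel (Tm.impl a c) (Tm.impl b c)
  | implR {a b c} : Rw srel a b → Rw srel (Tm.impl c a) (Tm.impl c b)
  | boxC {A a b} : Rw srel a b → Rw srel (Tm.box A a) (Tm.box A b)
  | boxStarC {B a b} : Rw srel a b → Rw srel (Tm.boxStar B a) (Tm.boxStar B b)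
  | appL {α β : Tm Agent AgSet Atom n true} {c : Tm Agent AgSet Atom n false} :
      Rw srel α β → Rw srel (Tm.app α c) (Tm.app β c)
  | appR {α : Tm Agent AgSet Atom n true} {a b : Tm Agent AgSet Atom n false} :
      Rw srel a b → Rw srel (Tm.app α a) (Tm.app α b)
  | preC {α β : Tm Agent AgSet Atom n true} :
      Rw srel α β → Rw srel (Tm.pre α) (Tm.pre β)
  | sigC (i k : Fin n) (ψ : Fin n → Tm Agent AgSet Atom n false)
      {b : Tm Agent AgSet Atom n false} :
      Rw srel (ψ k) b → Rw srel (Tm.sig i ψ) (Tm.sig i (Function.update ψ k b))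
  | compL {α β γ : Tm Agent AgSet Atom n true} :
      Rw srel α β → Rw srel (Tm.comp α γ) (Tm.comp β γ)
  | compR {α β γ : Tm Agent AgSet Atom n true} :
      Rw srel α β → Rw srel (Tm.comp γ α) (Tm.comp γ β)

/-- The numerical interpretation of terms. -/
def val : {b : Bool} → Tm Agent AgSet Atom n b → ℕ
  | _, .tru => 3
  | _, .atom _ => 3
  | _, .neg a => val a + 1
  | _, .conj a b => val a + val b
  | _, .impl a b => val a + val b + 3
  | _, .box _ a => val a + 2
  | _, .boxStar _ a => val a + 1
  | _, .app a b => val a ^ val b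
  | _, .pre a => val a
  | _, .sig _ ψ => (∑ j, val (ψ j)) + 1
  | _, .comp a b => val a ^ (val b + 1)

theorem val_ge3 : ∀ {b : Bool} (t : Tm Agent AgSet Atom n b), 3 ≤ val t
  | _, .tru => le_refl 3
  | _, .atom _ => le_refl 3
  | _, .neg a => by have := val_ge3 a; simp only [val]; omega
  | _, .conj a b => by have := val_ge3 a; have := val_ge3 b; simp only [val]; omega
  | _, .impl a b => by have := val_ge3 a; have := val_ge3 b; simp only [val]; omega
  | _, .box _ a => by have := val_ge3 a; simp only [val]; omega
  | _, .boxStar _ a => by have := val_ge3 a; simp only [val]; omega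
  | _, .app a b => by
      have ha := val_ge3 a; have hb := val_ge3 b
      simp only [val]
      calc 3 ≤ val a := ha
        _ = val a ^ 1 := (pow_one _).symm
        _ ≤ val a ^ val b := Nat.pow_le_pow_right (by omega) (by omega)
  | _, .pre a => val_ge3 a
  | _, .sig i ψ => by
      have h := val_ge3 (ψ i)
      have : val (ψ i) ≤ ∑ j, val (ψ j) :=
        Finset.single_le_sum (f := fun j => val (ψ j)) (fun j _ => Nat.zero_le _) (Finset.mem_univ i)
      simp only [val]; omega
  | _, .comp a b => by
      have ha := val_ge3 a; have hb := val_ge3 b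
      simp only [val]
      calc 3 ≤ val a := ha
        _ = val a ^ 1 := (pow_one _).symm
        _ ≤ val a ^ (val b + 1) := Nat.pow_le_pow_right (by omega) (by omega)

theorem arel_val {srel : Agent → Fin n → Fin n → Prop} {A : Agent}
    {α β : Tm Agent AgSet Atom n true} (h : ARel srel A α β) : val β = val α := by
  induction h with
  | sig i j ψ _ => simp [val]
  | comp _ _ ih1 ih2 => simp [val, ih1, ih2]

/-- An auxiliary index extractor for `sig` terms. -/
def sigIdx : Tm Agent AgSet Atom n true → Option (Fin n)
  | .sig i _ => some i
  | .comp _ _ => none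

/-- A component extractor for `comp` terms. -/
def compParts (α : Tm Agent AgSet Atom n true) :
    Option (Tm Agent AgSet Atom n true × Tm Agent AgSet Atom n true) :=
  match α with
  | .sig _ _ => none
  | .comp a b => some (a, b)

/-- Successor sets in the canonical action model are finite, of cardinality
bounded by the interpretation. -/
theorem succ_bound (srel : Agent → Fin n → Fin n → Prop) (A : Agent) :
    ∀ α : Tm Agent AgSet Atom n true,
      ∃ s : Finset (Tm Agent AgSet Atom n true),
        (∀ β, ARel srel A α β → β ∈ s) ∧ s.card ≤ val α
  | .sig i ψ => by
      classical
      refine ⟨Finset.univ.image (fun j : Fin n => Tm.sig j ψ), ?_, ?_⟩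
      · intro β hβ
        cases hβ with
        | sig i j ψ h => exact Finset.mem_image.2 ⟨j, Finset.mem_univ _, rfl⟩
      · calc (Finset.univ.image (fun j : Fin n => Tm.sig j ψ)).card
            ≤ (Finset.univ : Finset (Fin n)).card := Finset.card_image_le
          _ = n := by simp
          _ ≤ val (Tm.sig i ψ : Tm Agent AgSet Atom n true) := by
              have : ∀ j : Fin n, 3 ≤ val (ψ j) := fun j => val_ge3 _
              have hsum : n * 3 ≤ ∑ j, val (ψ j) := by
                calc n * 3 = ∑ _j : Fin n, 3 := by simp [Finset.sum_const, mul_comm]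
                  _ ≤ ∑ j, val (ψ j) := Finset.sum_le_sum fun j _ => this j
              simp only [val]; omega
  | .comp a b => by
      classical
      obtain ⟨s₁, hs₁, hc₁⟩ := succ_bound srel A a
      obtain ⟨s₂, hs₂, hc₂⟩ := succ_bound srel A b
      refine ⟨Finset.image₂ Tm.comp s₁ s₂, ?_, ?_⟩
      · intro β hβ
        cases hβ with
        | comp h1 h2 => exact Finset.mem_image₂.2 ⟨_, hs₁ _ h1, _, hs₂ _ h2, rfl⟩
      · have ha := val_ge3 a; have hb := val_ge3 b
        calc (Finset.image₂ Tm.comp s₁ s₂).card ≤ s₁.card * s₂.card :=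
              Finset.card_image₂_le _ _ _
          _ ≤ val a * val b := Nat.mul_le_mul hc₁ hc₂
          _ ≤ val a * val a ^ val b := by
              have : val b < 2 ^ val b := Nat.lt_two_pow_self
              have h2 : (2 : ℕ) ^ val b ≤ val a ^ val b :=
                Nat.pow_le_pow_left (by omega) _
              exact Nat.mul_le_mul_left _ (by omega)
          _ = val a ^ (val b + 1) := by rw [pow_succ, mul_comm]
          _ = val (Tm.comp a b : Tm Agent AgSet Atom n true) := rfl

theorem val_conjList (l : List (Tm Agent AgSet Atom n false)) :
    val (conjList l) = (l.map val).sum + 3 := by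
  induction l with
  | nil => simp [conjList, val]
  | cons a t ih =>
      simp only [conjList, List.foldr_cons, List.map_cons, List.sum_cons]
      simp only [conjList] at ih
      simp [val, ih]; omega

/-- 6z ≤ 3^z for z ≥ 3. -/
theorem six_mul_le (z : ℕ) (hz : 3 ≤ z) : 6 * z ≤ 3 ^ z := by
  obtain ⟨k, rfl⟩ : ∃ k, z = k + 3 := ⟨z - 3, by omega⟩
  induction k with
  | zero => norm_num
  | succ m ih =>
      have h := ih (by omega)
      have : 3 ^ (m + 1 + 3) = 3 ^ (m + 3) * 3 := by ring
      rw [this]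
      have h27 : 27 ≤ 3 ^ (m + 3) := by
        calc (27 : ℕ) = 3 ^ 3 := by norm_num
          _ ≤ 3 ^ (m + 3) := Nat.pow_le_pow_right (by omega) (by omega)
      omega

theorem key1 {y z : ℕ} (hy : 3 ≤ y) (hz : 3 ≤ z) : (y + 1) * z < y ^ z := by
  obtain ⟨w, rfl⟩ : ∃ w, z = w + 1 := ⟨z - 1, by omega⟩
  have h1 : 2 * (w + 1) ≤ 3 ^ w := by
    have := six_mul_le (w + 1) hz
    have : 6 * (w + 1) ≤ 3 ^ w * 3 := by
      rw [← pow_succ]; exact six_mul_le (w + 1) hz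
    omega
  have h2 : 3 ^ w ≤ y ^ w := Nat.pow_le_pow_left (by omega) _
  calc (y + 1) * (w + 1) = y * (w + 1) + (w + 1) := by ring
    _ < y * (w + 1) + y * (w + 1) := by nlinarith
    _ = 2 * (w + 1) * y := by ring
    _ ≤ 3 ^ w * y := Nat.mul_le_mul_right _ h1
    _ ≤ y ^ w * y := Nat.mul_le_mul_right _ h2
    _ = y ^ (w + 1) := (pow_succ _ _).symm

theorem key2 {y z : ℕ} (hy : 3 ≤ y) (hz : 3 ≤ z) :
    (y + 1) * (z + 1) < y ^ (z + 1) + 1 := by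
  have h := key1 hy hz
  calc (y + 1) * (z + 1) = (y + 1) * z + (y + 1) := by ring
    _ < y ^ z + (y + 1) := by omega
    _ ≤ y ^ z + y ^ z * 2 := by
        have hyz : y ≤ y ^ z := Nat.le_self_pow (by omega) _
        omega
    _ = y ^ z * 3 := by ring
    _ ≤ y ^ z * y := Nat.mul_le_mul_left _ hy
    _ = y ^ (z + 1) := (pow_succ _ _).symm
    _ < y ^ (z + 1) + 1 := Nat.lt_succ_self _

theorem key3 {x y : ℕ} (hx : 3 ≤ x) (hy : 3 ≤ y) :
    x + x ^ y + 4 < x ^ (y + 1) := by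
  have h9 : 9 ≤ x ^ (y - 1) := by
    calc (9:ℕ) = 3 ^ 2 := by norm_num
      _ ≤ x ^ 2 := Nat.pow_le_pow_left hx _
      _ ≤ x ^ (y - 1) := Nat.pow_le_pow_right (by omega) (by omega)
  have hxy : 9 * x ≤ x ^ y := by
    calc 9 * x ≤ x ^ (y - 1) * x := Nat.mul_le_mul_right _ h9
      _ = x ^ (y - 1 + 1) := (pow_succ _ _).symm
      _ = x ^ y := by congr 1; omega
  calc x + x ^ y + 4 < 3 * x ^ y := by omega
    _ = x ^ y * 3 := by ring
    _ ≤ x ^ y * x := Nat.mul_le_mul_left _ hx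
    _ = x ^ (y + 1) := (pow_succ _ _).symm

theorem key6 {a x L : ℕ} (ha : 3 ≤ a) (hx : 3 ≤ x) (hL : L ≤ a) :
    a + (L * (a ^ x + 2) + 3) + 3 < a ^ (x + 2) := by
  have h27 : 27 ≤ a ^ x := by
    calc (27:ℕ) = 3 ^ 3 := by norm_num
      _ ≤ a ^ 3 := Nat.pow_le_pow_left ha _
      _ ≤ a ^ x := Nat.pow_le_pow_right (by omega) hx
  have h1 : L * (a ^ x + 2) ≤ a * (a ^ x + 2) := Nat.mul_le_mul_right _ hL
  have hax1 : 27 * a ≤ a ^ x * a := Nat.mul_le_mul_right _ h27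
  have key : a * a ^ x + 3 * a + 6 < a ^ x * a * a := by nlinarith
  calc a + (L * (a ^ x + 2) + 3) + 3 ≤ a + (a * (a ^ x + 2) + 3) + 3 := by omega
    _ = a * a ^ x + 3 * a + 6 := by ring
    _ < a ^ x * a * a := key
    _ = a ^ (x + 2) := by rw [pow_succ, pow_succ]

theorem sum_update_lt {ψ : Fin n → Tm Agent AgSet Atom n false} {k : Fin n}
    {b : Tm Agent AgSet Atom n false} (h : val b < val (ψ k)) :
    ∑ j, val (Function.update ψ k b j) < ∑ j, val (ψ j) := by
  rw [show (fun j => val (Function.update ψ k b j)) =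
      Function.update (fun j => val (ψ j)) k (val b) from ?_]
  · rw [Finset.sum_update_of_mem (Finset.mem_univ k)]
    rw [← Finset.erase_eq]
    have := Finset.add_sum_erase Finset.univ (fun j => val (ψ j)) (Finset.mem_univ k)
    beta_reduce at this
    omega
  · funext j
    by_cases hj : j = k
    · subst hj; simp
    · simp [Function.update_of_ne hj]

/-- Every rewrite step strictly decreases the interpretation. -/
theorem rw_val_lt {srel : Agent → Fin n → Fin n → Prop} :
    ∀ {b : Bool} {s t : Tm Agent AgSet Atom n b}, Rw srel s t → val t < val s := by
  intro b s t h
  induction h with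
  | r1 x y =>
      have := val_ge3 x; have := val_ge3 y; simp only [val]; omega
  | r2 i ψ =>
      have : val (ψ i) ≤ ∑ j, val (ψ j) :=
        Finset.single_le_sum (f := fun j => val (ψ j)) (fun j _ => Nat.zero_le _) (Finset.mem_univ i)
      simp only [val]; omega
  | r3 x y =>
      have hx := val_ge3 x; have hy := val_ge3 y
      have := key3 hx hy
      simp only [val]; omega
  | r4 x p =>
      have hx := val_ge3 x
      have h27 : 27 ≤ val x ^ 3 := by
        calc (27:ℕ) = 3 ^ 3 := by norm_num
          _ ≤ val x ^ 3 := Nat.pow_le_pow_left hx _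
      have h9x : 9 * val x ≤ val x ^ 3 := by
        have : val x * val x ≥ 3 * val x := Nat.mul_le_mul_right _ hx
        calc 9 * val x ≤ 3 * (val x * val x) := by omega
          _ ≤ val x * (val x * val x) := Nat.mul_le_mul_right _ hx
          _ = val x ^ 3 := by ring
      simp only [val]; omega
  | r5 x y =>
      have hx := val_ge3 x; have hy := val_ge3 y
      have := key3 hx hy
      simp only [val]; omega
  | r6 x y z =>
      have hx := val_ge3 x; have hy := val_ge3 y; have hz := val_ge3 z
      have h1 : 27 ≤ val x ^ val y := by
        calc (27:ℕ) = 3 ^ 3 := by norm_num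
          _ ≤ 3 ^ val y := Nat.pow_le_pow_right (by omega) hy
          _ ≤ val x ^ val y := Nat.pow_le_pow_left hx _
      have h2 : 27 ≤ val x ^ val z := by
        calc (27:ℕ) = 3 ^ 3 := by norm_num
          _ ≤ 3 ^ val z := Nat.pow_le_pow_right (by omega) hz
          _ ≤ val x ^ val z := Nat.pow_le_pow_left hx _
      have h3 : val x ^ (val y + val z) = val x ^ val y * val x ^ val z :=
        pow_add _ _ _
      simp only [val]
      nlinarith
  | r7 α A x l hnd hmem =>
      classical
      have hα := val_ge3 α; have hx := val_ge3 x
      obtain ⟨s, hs, hcard⟩ := succ_bound srel A α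
      have hlen : l.length ≤ val α := by
        have hsub : l.toFinset ⊆ s := by
          intro β hβ
          exact hs β ((hmem β).1 (List.mem_toFinset.1 hβ))
        calc l.length = l.toFinset.card := (List.toFinset_card_of_nodup hnd).symm
          _ ≤ s.card := Finset.card_le_card hsub
          _ ≤ val α := hcard
      have hmap : ((l.map fun β => Tm.box A (Tm.app β x)).map val).sum
          ≤ l.length * (val α ^ val x + 2) := by
        rw [List.map_map]
        have : ∀ v ∈ l.map (val ∘ fun β => Tm.box A (Tm.app β x)),
            v ≤ val α ^ val x + 2 := by
          intro v hv
          obtain ⟨β, hβ, rfl⟩ := List.mem_map.1 hv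
          have : val β = val α := arel_val ((hmem β).1 hβ)
          simp [val, this]
        calc (l.map (val ∘ fun β => Tm.box A (Tm.app β x))).sum
            ≤ (l.map (val ∘ fun β => Tm.box A (Tm.app β x))).length •
              (val α ^ val x + 2) := List.sum_le_card_nsmul _ _ this
          _ = l.length * (val α ^ val x + 2) := by simp [smul_eq_mul]
      have hconj := val_conjList (l.map fun β => Tm.box A (Tm.app β x))
      have hkey := key6 (a := val α) (x := val x) (L := l.length) hα hx hlen
      simp only [val]
      rw [hconj]
      have : l.length * (val α ^ val x + 2) + 3 + val α + 3 < val α ^ (val x + 2) := by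
        omega
      omega
  | r8 x y z =>
      have hx := val_ge3 x; have hy := val_ge3 y; have hz := val_ge3 z
      simp only [val]
      rw [← pow_mul]
      exact Nat.pow_lt_pow_right (by omega) (key1 hy hz)
  | r9 x y z =>
      have hx := val_ge3 x; have hy := val_ge3 y; have hz := val_ge3 z
      simp only [val]
      rw [← pow_mul]
      exact Nat.pow_lt_pow_right (by omega) (key2 hy hz)
  | negC _ ih => simp only [val]; omega
  | conjL _ ih => simp only [val]; omega
  | conjR _ ih => simp only [val]; omega
  | implL _ ih => simp only [val]; omega
  | implR _ ih => simp only [val]; omega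
  | boxC _ ih => simp only [val]; omega
  | boxStarC _ ih => simp only [val]; omega
  | appL h ih =>
      rename_i α β c
      have hc := val_ge3 c
      simp only [val]
      exact Nat.pow_lt_pow_left ih (by omega)
  | appR h ih =>
      rename_i α a b
      have hα := val_ge3 α
      simp only [val]
      exact Nat.pow_lt_pow_right (by omega) ih
  | preC _ ih => simp only [val]; omega
  | sigC i k ψ h ih =>
      simp only [val]
      have := sum_update_lt (ψ := ψ) (k := k) ih
      omega
  | compL h ih =>
      rename_i α β γ
      have hγ := val_ge3 γ
      simp only [val]
      exact Nat.pow_lt_pow_left ih (by omega)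
  | compR h ih =>
      rename_i α β γ
      have hγ := val_ge3 γ
      simp only [val]
      exact Nat.pow_lt_pow_right (by omega) (by omega)

end Tm

/-- The rewriting system is terminating: there is no infinite sequence of
rewrites `t₁ ⇝ t₂ ⇝ t₃ ⇝ ⋯`. -/
theorem rewriting_terminates {Agent AgSet Atom : Type} {n : ℕ}
    (srel : Agent → Fin n → Fin n → Prop) (b : Bool) :
    ¬ ∃ f : ℕ → Tm Agent AgSet Atom n b, ∀ k, Tm.Rw srel (f k) (f (k + 1)) := by
  rintro ⟨f, hf⟩
  have hdec : ∀ k, Tm.val (f (k + 1)) < Tm.val (f k) := fun k => Tm.rw_val_lt (hf k)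
  have hbound : ∀ k, Tm.val (f k) + k ≤ Tm.val (f 0) := by
    intro k
    induction k with
    | zero => omega
    | succ m ih => have := hdec m; omega
  have := hbound (Tm.val (f 0) + 1)
  omega
end

section
/- The sentence [Pub ◇⊤]* ◇□⊥ of public-announcement logic with action iteration is satisfiable but has no finite model: it holds at a state s of S iff for every n, s survives n applications of the operation deleting all end states and, in the n-th derived model, s has a successor that is an end state; any model containing such a state is infinite. -/
/-! A state satisfying `[Pub ◇⊤]* ◇□⊥` has, for each `n`, a successor `tₙ` that is an end state
of the `n`-th derived model. So `tₙ` survives exactly `n` announcements, and the `tₙ` are pairwise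
distinct. Conversely, a root seeing the tops of descending chains `k → k-1 → … → 1` of every length
satisfies the sentence: after `n` announcements the chains of length at most `n` are gone, and the
bottom of the remaining chains is an end state. -/

/-- The n-fold derivative of a single-agent Kripke frame: `Deriv r (n+1)` is the
set of states of `Deriv r n` having at least one successor inside `Deriv r n`
(i.e. the result of `n+1` public announcements of ◇⊤, each deleting the end
states). -/
def Deriv {W : Type} (r : W → W → Prop) : ℕ → Set W
  | 0 => Set.univ
  | n + 1 => {s | s ∈ Deriv r n ∧ ∃ t, t ∈ Deriv r n ∧ r s t}

/-- Truth of the sentence `[Pub ◇⊤]* ◇□⊥` at `s`: for every `n`, `s` survives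
`n` announcements and, in the n-th derived model, `s` has a successor that is
an end state there. -/
def SatPubIter {W : Type} (r : W → W → Prop) (s : W) : Prop :=
  ∀ n, s ∈ Deriv r n ∧
    ∃ t, t ∈ Deriv r n ∧ r s t ∧ ∀ u, u ∈ Deriv r n → ¬ r t u

open Function

namespace Deriv

variable {W : Type} {r : W → W → Prop}

theorem antitone (r : W → W → Prop) : Antitone (Deriv r) :=
  antitone_nat_of_succ_le fun _ _ hs => hs.1

theorem not_mem_succ_of_forall_not_rel {n : ℕ} {t : W} (ht : ∀ u ∈ Deriv r n, ¬ r t u) :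
    t ∉ Deriv r (n + 1) :=
  fun ⟨_, u, hu, htu⟩ => ht u hu htu

end Deriv

theorem injective_of_mem_diff_succ {α : Type} {A : ℕ → Set α} (hA : Antitone A) {t : ℕ → α}
    (ht : ∀ n, t n ∈ A n \ A (n + 1)) : Injective t :=
  Injective.of_lt_imp_ne fun n m hnm heq =>
    (ht n).2 (heq ▸ hA (Nat.succ_le_of_lt hnm) (ht m).1)

theorem SatPubIter.infinite {W : Type} {r : W → W → Prop} {s : W} (hs : SatPubIter r s) :
    Infinite W := by
  choose t ht _ hend using fun n => (hs n).2
  exact Infinite.of_injective t <| injective_of_mem_diff_succ (Deriv.antitone r)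
    fun n => ⟨ht n, Deriv.not_mem_succ_of_forall_not_rel (hend n)⟩

def fanRel (a b : ℕ) : Prop := 0 < b ∧ (a = 0 ∨ b < a)

theorem deriv_fanRel (n : ℕ) : Deriv fanRel n = {m | m = 0 ∨ n < m} := by
  induction n with
  | zero => ext m; simp only [Deriv, Set.mem_univ, Set.mem_ofPred_eq, true_iff]; omega
  | succ n ih =>
    ext m
    simp only [Deriv, ih, Set.mem_ofPred_eq, fanRel]
    constructor
    · rintro ⟨-, u, hu, hmu⟩
      omega
    · intro hm
      exact ⟨by omega, n + 1, by omega, by omega⟩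

theorem satPubIter_fanRel_zero : SatPubIter fanRel 0 := fun n => by
  rw [deriv_fanRel]
  refine ⟨Or.inl rfl, n + 1, Or.inr n.lt_succ_self, ⟨n.succ_pos, Or.inl rfl⟩, ?_⟩
  rintro u hu ⟨hu_pos, hlt⟩
  simp only [Set.mem_ofPred_eq] at hu
  omega

/-- `[Pub ◇⊤]* ◇□⊥` is satisfiable, but not in any finite model. -/
theorem pub_iter_satisfiable_but_no_finite_model :
    (∃ (W : Type) (r : W → W → Prop) (s : W), SatPubIter r s) ∧
    (∀ (W : Type) (r : W → W → Prop) (s : W), Finite W → ¬ SatPubIter r s) :=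
  ⟨⟨ℕ, fanRel, 0, satPubIter_fanRel_zero⟩,
    fun W _ _ _ hs => have := hs.infinite; not_finite W⟩
end

section
/- In the cycle model C_n (n even, two agents A and B), the states a_{n+1} and a_{3n+1} disagree on the public-announcement sentence ⟨Pub p⟩◇*_{A,B} q: precisely, ⟦⟨Pub p⟩◇*_{A,B} q⟧_{C_n} = {a_i : 2n+2 ≤ i ≤ 5n}, so a_{3n+1} satisfies it while a_{n+1} does not. -/
/-- The cycle model `C_n` lives on `ZMod (5*n)`, where the element `x` stands
for the point `a_{x+1}`.  Neighbouring points are joined by symmetric edges,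
alternately labelled by the two agents A and B: the edge between `x` and `x+1`
belongs to A when `x` is even and to B when `x` is odd. -/
def relA (n : ℕ) (x y : ZMod (5 * n)) : Prop :=
  (y = x + 1 ∧ x.val % 2 = 0) ∨ (x = y + 1 ∧ y.val % 2 = 0)

def relB (n : ℕ) (x y : ZMod (5 * n)) : Prop :=
  (y = x + 1 ∧ x.val % 2 = 1) ∨ (x = y + 1 ∧ y.val % 2 = 1)

/-- `p` holds at all points except `a_1` and `a_{2n+1}`. -/
def pAt (n : ℕ) (x : ZMod (5 * n)) : Prop :=
  x ≠ 0 ∧ x ≠ ((2 * n : ℕ) : ZMod (5 * n))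

/-- `q` holds only at `a_{4n+1}`. -/
def qAt (n : ℕ) (x : ZMod (5 * n)) : Prop :=
  x = ((4 * n : ℕ) : ZMod (5 * n))

/-- The accessibility relation of the model relativized by the public
announcement of `p`: both endpoints must satisfy `p`. -/
def relP (n : ℕ) (x y : ZMod (5 * n)) : Prop :=
  pAt n x ∧ pAt n y ∧ (relA n x y ∨ relB n x y)

/-- Truth of `⟨Pub p⟩◇*_{A,B} q` at `x`: `x` satisfies `p` and, in the
relativized model, some `q`-state is reachable from `x`. -/
def SatAnn (n : ℕ) (x : ZMod (5 * n)) : Prop :=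
  pAt n x ∧ ∃ y, Relation.ReflTransGen (relP n) x y ∧ qAt n y

/-!
Announcing `p` deletes `a_1` and `a_{2n+1}`, which cuts the cycle into the two arcs
`a_2, …, a_{2n}` and `a_{2n+2}, …, a_{5n}`. Since `◇*_{A,B}` follows edges of both agents, the
labels play no role: the points reachable from `x` are exactly those of its arc, and the only
`q`-point `a_{4n+1}` lies on the second one.
-/

open Relation

namespace ZMod

variable {m : ℕ} [NeZero m]

theorem val_add_one_of_add_one_ne_zero {x : ZMod m} (h : x + 1 ≠ 0) :
    (x + 1).val = x.val + 1 := by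
  have hval : (x + 1).val = (x.val + 1) % m := by
    conv_lhs => rw [← natCast_zmod_val x]
    rw [← Nat.cast_succ, val_natCast]
  rcases (Nat.add_one_le_of_lt x.val_lt).lt_or_eq with hlt | heq
  · rw [hval, Nat.mod_eq_of_lt hlt]
  · rw [heq, Nat.mod_self] at hval
    exact absurd hval ((val_ne_zero _).mpr h)

theorem eq_add_one_iff_val_eq {x y : ZMod m} (hy : y ≠ 0) : y = x + 1 ↔ y.val = x.val + 1 := by
  constructor
  · rintro rfl
    exact val_add_one_of_add_one_ne_zero hy
  · intro h
    rw [← natCast_zmod_val y, h, Nat.cast_succ, natCast_zmod_val]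

theorem eq_natCast_iff_val_eq {x : ZMod m} {a : ℕ} (ha : a < m) : x = a ↔ x.val = a := by
  constructor
  · rintro rfl
    exact val_cast_of_lt ha
  · intro h
    rw [← natCast_zmod_val x, h]

end ZMod

section CycleModel

variable {n : ℕ}

theorem relA_or_relB_iff {x y : ZMod (5 * n)} :
    relA n x y ∨ relB n x y ↔ y = x + 1 ∨ x = y + 1 := by
  constructor
  · rintro ((⟨h, -⟩ | ⟨h, -⟩) | (⟨h, -⟩ | ⟨h, -⟩)) <;> simp [h]
  · rintro (h | h)
    · rcases Nat.mod_two_eq_zero_or_one x.val with hx | hx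
      · exact Or.inl (Or.inl ⟨h, hx⟩)
      · exact Or.inr (Or.inl ⟨h, hx⟩)
    · rcases Nat.mod_two_eq_zero_or_one y.val with hy | hy
      · exact Or.inl (Or.inr ⟨h, hy⟩)
      · exact Or.inr (Or.inr ⟨h, hy⟩)

variable [NeZero n]

theorem pAt_iff_val {x : ZMod (5 * n)} : pAt n x ↔ x.val ≠ 0 ∧ x.val ≠ 2 * n := by
  have h2n : 2 * n < 5 * n := by have := NeZero.pos n; omega
  rw [pAt, ZMod.val_ne_zero, Ne, Ne, ZMod.eq_natCast_iff_val_eq h2n]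

theorem relP_iff_val {x y : ZMod (5 * n)} :
    relP n x y ↔ (x.val ≠ 0 ∧ x.val ≠ 2 * n) ∧ (y.val ≠ 0 ∧ y.val ≠ 2 * n) ∧
      (y.val = x.val + 1 ∨ x.val = y.val + 1) := by
  rw [relP, relA_or_relB_iff, pAt_iff_val, pAt_iff_val]
  refine and_congr_right fun hx => and_congr_right fun hy => ?_
  rw [ZMod.eq_add_one_iff_val_eq ((ZMod.val_ne_zero y).mp hy.1),
    ZMod.eq_add_one_iff_val_eq ((ZMod.val_ne_zero x).mp hx.1)]

theorem val_lt_of_reflTransGen_relP {x y : ZMod (5 * n)} (h : ReflTransGen (relP n) x y)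
    (hx : x.val < 2 * n) : y.val < 2 * n := by
  induction h with
  | refl => exact hx
  | tail _ hbc ih =>
    rw [relP_iff_val] at hbc
    omega

theorem reflTransGen_relP_of_le {x y : ZMod (5 * n)} (hx : 2 * n + 1 ≤ x.val)
    (hy : 2 * n + 1 ≤ y.val) : ReflTransGen (relP n) x y := by
  have hadj : ∀ i : ℕ, 2 * n + 1 ≤ i → i + 1 < 5 * n →
      relP n i ((i + 1 : ℕ) : ZMod (5 * n)) ∧ relP n ((i + 1 : ℕ) : ZMod (5 * n)) i := by
    intro i hi hi5
    rw [relP_iff_val, relP_iff_val, ZMod.val_cast_of_lt hi5,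
      ZMod.val_cast_of_lt (Nat.lt_of_succ_lt hi5)]
    omega
  have hx5 := x.val_lt
  have hy5 := y.val_lt
  have hnat : ReflTransGen (fun i j : ℕ => relP n i j) x.val y.val :=
    reflTransGen_of_succ _ (fun i hi => (hadj i (by grind) (by grind)).1)
      (fun i hi => (hadj i (by grind) (by grind)).2)
  simpa only [Function.onFun, ZMod.natCast_zmod_val] using
    hnat.lift (fun i : ℕ => (i : ZMod (5 * n))) fun _ _ h => h

theorem satAnn_iff {x : ZMod (5 * n)} : SatAnn n x ↔ 2 * n + 1 ≤ x.val := by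
  have h4n : 4 * n < 5 * n := by have := NeZero.pos n; omega
  have hq : ∀ y : ZMod (5 * n), qAt n y ↔ y.val = 4 * n := fun y =>
    ZMod.eq_natCast_iff_val_eq h4n
  simp only [SatAnn, pAt_iff_val, hq]
  constructor
  · rintro ⟨⟨-, hx2n⟩, y, hxy, hy⟩
    by_contra! hx
    have := val_lt_of_reflTransGen_relP hxy (by omega)
    omega
  · intro hx
    have hval : ((4 * n : ℕ) : ZMod (5 * n)).val = 4 * n := ZMod.val_cast_of_lt h4n
    exact ⟨by omega, _, reflTransGen_relP_of_le hx (by omega), hval⟩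

end CycleModel

theorem cycle_model_announcement_general (n : ℕ) (hpos : 0 < n) :
    (∀ x : ZMod (5 * n), SatAnn n x ↔ 2 * n + 1 ≤ x.val) ∧
    SatAnn n ((3 * n : ℕ) : ZMod (5 * n)) ∧
    ¬ SatAnn n ((n : ℕ) : ZMod (5 * n)) := by
  have : NeZero n := ⟨hpos.ne'⟩
  refine ⟨fun x => satAnn_iff, ?_, ?_⟩ <;>
    rw [satAnn_iff, ZMod.val_cast_of_lt (by omega)] <;> omega

/-- In `C_n` (n even and positive), `⟨Pub p⟩◇*_{A,B} q` is true exactly at the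
points `a_i` with `2n+2 ≤ i ≤ 5n` (i.e. those `x` with `x.val ≥ 2n+1`); in
particular `a_{3n+1}` satisfies it while `a_{n+1}` does not. -/
theorem cycle_model_announcement (n : ℕ) (hn : Even n) (hpos : 0 < n) :
    (∀ x : ZMod (5 * n), SatAnn n x ↔ 2 * n + 1 ≤ x.val) ∧
    SatAnn n ((3 * n : ℕ) : ZMod (5 * n)) ∧
    ¬ SatAnn n ((n : ℕ) : ZMod (5 * n)) :=
  cycle_model_announcement_general n hpos
end
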